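/- Let B ∈ L(H,K) have closed range and suppose (A₁, N(B)) and (A₂, R(B)) are compatible pairs. Then the set GI(B,A₁,A₂) of bounded solutions C of the system BCB = B, CBC = C, A₁CB = (CB)*A₁, A₂BC = (BC)*A₂ equals {(I − Q) B† P : Q ∈ P(A₁, N(B)), P ∈ P(A₂, R(B))}, where B† is the Moore–Penrose inverse of B. -/

import Mathlib

/-!
If `C` solves the system, then `BCB = B` makes `CB` and `BC` idempotents with `N(CB) = N(B)` and
`R(BC) = R(B)`, so `Q = I - CB` and `P = BC` are admissible, and `C = CBC = (CB) B† (BC)` because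
`B B† B = B`. Conversely, for `C = (I - Q) B† P` one finds `BC = P` (as `B B†` fixes `R(B) = R(P)`)
and `CB = I - Q` (as `I - B† B` maps into `N(B) = R(Q)`), so the weighted conditions on `C` are
exactly those on `P` and `Q`.
-/

open ContinuousLinearMap

/-- `P(A,S)`: the set of `A`-Hermitian bounded projections with range `S`. -/
def PAS {H : Type*} [NormedAddCommGroup H] [InnerProductSpace ℂ H] [CompleteSpace H]
    (A : H →L[ℂ] H) (S : Submodule ℂ H) : Set (H →L[ℂ] H) :=
  {Q | Q ∘L Q = Q ∧ LinearMap.range (Q : H →ₗ[ℂ] H) = S ∧ A ∘L Q = adjoint Q ∘L A}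

namespace ContinuousLinearMap

section Ring

variable {R M N : Type*} [Ring R]
  [TopologicalSpace M] [AddCommGroup M] [Module R M]
  [TopologicalSpace N] [AddCommGroup N] [Module R N]

theorem comp_eq_zero_iff_range_le_ker {L : Type*} [TopologicalSpace L] [AddCommGroup L]
    [Module R L] {f : L →L[R] M} {g : M →L[R] N} :
    g ∘L f = 0 ↔ LinearMap.range (f : L →ₗ[R] M) ≤ LinearMap.ker (g : M →ₗ[R] N) := by
  rw [LinearMap.range_le_ker_iff, ← toLinearMap_comp, ← toLinearMap_zero, coe_inj]

theorem IsIdempotentElem.comp_eq_right_iff {q : M →L[R] M}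
    (hq : IsIdempotentElem q) (p : N →L[R] M) :
    q ∘L p = p ↔ LinearMap.range (p : N →ₗ[R] M) ≤ LinearMap.range (q : M →ₗ[R] M) := by
  rw [← LinearMap.IsIdempotentElem.comp_eq_right_iff hq.toLinearMap, ← toLinearMap_comp, coe_inj]

theorem IsIdempotentElem.range_one_sub_eq_ker [IsTopologicalAddGroup M] {q : M →L[R] M}
    (hq : IsIdempotentElem q) :
    LinearMap.range ((1 - q : M →L[R] M) : M →ₗ[R] M) = LinearMap.ker (q : M →ₗ[R] M) := by
  rw [LinearMap.IsIdempotentElem.ker_eq_range_one_sub hq.toLinearMap, toLinearMap_sub,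
    toLinearMap_one]

/-- `C` is an inner (`{1}`-) inverse of `B`. -/
def IsInnerInverse (B : M →L[R] N) (C : N →L[R] M) : Prop :=
  B ∘L C ∘L B = B

namespace IsInnerInverse

variable {B : M →L[R] N} {C : N →L[R] M}

theorem isIdempotentElem_comp_left (h : IsInnerInverse B C) : IsIdempotentElem (B ∘L C) := by
  change (B ∘L C ∘L B) ∘L C = B ∘L C
  rw [h]

theorem isIdempotentElem_comp_right (h : IsInnerInverse B C) : IsIdempotentElem (C ∘L B) := by
  change C ∘L (B ∘L C ∘L B) = C ∘L B
  rw [h]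

theorem range_comp (h : IsInnerInverse B C) :
    LinearMap.range ((B ∘L C : N →L[R] N) : N →ₗ[R] N) = LinearMap.range (B : M →ₗ[R] N) := by
  refine le_antisymm (LinearMap.range_comp_le_range _ _) ?_
  calc LinearMap.range (B : M →ₗ[R] N)
      = LinearMap.range ((B ∘L C ∘L B : M →L[R] N) : M →ₗ[R] N) := by rw [h]
    _ ≤ _ := LinearMap.range_comp_le_range (B : M →ₗ[R] N) ((B ∘L C : N →L[R] N) : N →ₗ[R] N)

theorem ker_comp (h : IsInnerInverse B C) :
    LinearMap.ker ((C ∘L B : M →L[R] M) : M →ₗ[R] M) = LinearMap.ker (B : M →ₗ[R] N) := by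
  refine le_antisymm ?_ (LinearMap.ker_le_ker_comp _ _)
  calc LinearMap.ker ((C ∘L B : M →L[R] M) : M →ₗ[R] M)
      ≤ LinearMap.ker ((B ∘L C ∘L B : M →L[R] N) : M →ₗ[R] N) :=
        LinearMap.ker_le_ker_comp ((C ∘L B : M →L[R] M) : M →ₗ[R] M) (B : M →ₗ[R] N)
    _ = _ := by rw [h]

variable [IsTopologicalAddGroup M] {Bd : N →L[R] M}
  {Q : M →L[R] M} {P : N →L[R] N}

theorem one_sub_comp_comp_comp_eq (hBd : IsInnerInverse B Bd) (hQ : IsIdempotentElem Q)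
    (hQr : LinearMap.range (Q : M →ₗ[R] M) = LinearMap.ker (B : M →ₗ[R] N))
    (hP : IsIdempotentElem P)
    (hPr : LinearMap.range (P : N →ₗ[R] N) = LinearMap.range (B : M →ₗ[R] N)) :
    ((1 - Q) ∘L Bd ∘L P) ∘L B = 1 - Q := by
  have hPB : P ∘L B = B := (IsIdempotentElem.comp_eq_right_iff hP B).2 hPr.ge
  have hQ_fix : Q ∘L (1 - Bd ∘L B) = 1 - Bd ∘L B := by
    refine (IsIdempotentElem.comp_eq_right_iff hQ _).2 ?_
    rw [IsIdempotentElem.range_one_sub_eq_ker hBd.isIdempotentElem_comp_right, hBd.ker_comp, hQr]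
  calc ((1 - Q) ∘L Bd ∘L P) ∘L B = (1 - Q) ∘L Bd ∘L B := by rw [comp_assoc, comp_assoc, hPB]
    _ = 1 - Q - (1 - Bd ∘L B - Q ∘L (1 - Bd ∘L B)) := by
      simp only [sub_comp, comp_sub, one_def, id_comp, comp_id]
      abel
    _ = 1 - Q := by rw [hQ_fix, sub_self, sub_zero]

theorem comp_one_sub_comp_comp_eq [IsTopologicalAddGroup N] (hBd : IsInnerInverse B Bd)
    (hQr : LinearMap.range (Q : M →ₗ[R] M) = LinearMap.ker (B : M →ₗ[R] N))
    (hPr : LinearMap.range (P : N →ₗ[R] N) = LinearMap.range (B : M →ₗ[R] N)) :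
    B ∘L (1 - Q) ∘L Bd ∘L P = P := by
  have hBQ : B ∘L Q = 0 := comp_eq_zero_iff_range_le_ker.2 hQr.le
  have hBBdP : (B ∘L Bd) ∘L P = P := by
    refine (IsIdempotentElem.comp_eq_right_iff hBd.isIdempotentElem_comp_left P).2 ?_
    rw [hBd.range_comp, hPr]
  rw [← comp_assoc, comp_sub, hBQ, sub_zero, one_def, comp_id, ← comp_assoc, hBBdP]

end IsInnerInverse

end Ring

section InnerProductSpace

variable {𝕜 E : Type*} [RCLike 𝕜] [NormedAddCommGroup E] [InnerProductSpace 𝕜 E] [CompleteSpace E]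

/-- `T` is `A`-selfadjoint, i.e. selfadjoint for the semi-inner product `⟪A x, y⟫`. -/
def IsSelfAdjointWrt (A T : E →L[𝕜] E) : Prop :=
  A ∘L T = adjoint T ∘L A

theorem IsSelfAdjointWrt.one_sub {A T : E →L[𝕜] E} (h : IsSelfAdjointWrt A T) :
    IsSelfAdjointWrt A (1 - T) := by
  unfold IsSelfAdjointWrt at h ⊢
  rw [map_sub, adjoint_one, comp_sub, sub_comp, h, one_def, comp_id, id_comp]

end InnerProductSpace

end ContinuousLinearMap

theorem stmt_7_general
    {H K : Type*}
    [NormedAddCommGroup H] [InnerProductSpace ℂ H] [CompleteSpace H]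
    [NormedAddCommGroup K] [InnerProductSpace ℂ K] [CompleteSpace K]
    (B : H →L[ℂ] K)
    (A₁ : H →L[ℂ] H)
    (A₂ : K →L[ℂ] K)
    -- `Bd` is the Moore–Penrose inverse of `B`, characterized by the four Penrose equations.
    (Bd : K →L[ℂ] H) (hd1 : B ∘L Bd ∘L B = B) :
    {C : K →L[ℂ] H |
        B ∘L C ∘L B = B ∧ C ∘L B ∘L C = C ∧
        A₁ ∘L (C ∘L B) = adjoint (C ∘L B) ∘L A₁ ∧
        A₂ ∘L (B ∘L C) = adjoint (B ∘L C) ∘L A₂} =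
      {C : K →L[ℂ] H | ∃ Q ∈ PAS A₁ (LinearMap.ker (B : H →ₗ[ℂ] K)), ∃ P ∈ PAS A₂ (LinearMap.range (B : H →ₗ[ℂ] K)),
        C = (1 - Q) ∘L Bd ∘L P} := by
  have hBd : IsInnerInverse B Bd := hd1
  ext C
  constructor
  · rintro ⟨hBCB, hCBC, hCB, hBC⟩
    have hC : IsInnerInverse B C := hBCB
    refine ⟨1 - C ∘L B, ⟨hC.isIdempotentElem_comp_right.one_sub, ?_, IsSelfAdjointWrt.one_sub hCB⟩,
      B ∘L C, ⟨hC.isIdempotentElem_comp_left, hC.range_comp, hBC⟩, ?_⟩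
    · rw [IsIdempotentElem.range_one_sub_eq_ker hC.isIdempotentElem_comp_right, hC.ker_comp]
    · rw [sub_sub_cancel]
      calc C = C ∘L (B ∘L Bd ∘L B) ∘L C := by rw [hd1, hCBC]
        _ = (C ∘L B) ∘L Bd ∘L B ∘L C := rfl
  · rintro ⟨Q, ⟨hQ, hQr, hQA⟩, P, ⟨hP, hPr, hPA⟩, rfl⟩
    have hCB := hBd.one_sub_comp_comp_comp_eq hQ hQr hP hPr
    have hBC := hBd.comp_one_sub_comp_comp_eq hQr hPr
    have hPB : P ∘L B = B := (IsIdempotentElem.comp_eq_right_iff hP B).2 hPr.ge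
    refine ⟨?_, ?_, ?_, ?_⟩
    · rw [← comp_assoc, hBC, hPB]
    · rw [hBC]
      change (1 - Q) ∘L Bd ∘L (P ∘L P) = _
      rw [show P ∘L P = P from hP]
    · rw [hCB]
      exact IsSelfAdjointWrt.one_sub hQA
    · rw [hBC]
      exact hPA

theorem stmt_7
    {H K : Type*}
    [NormedAddCommGroup H] [InnerProductSpace ℂ H] [CompleteSpace H]
    [NormedAddCommGroup K] [InnerProductSpace ℂ K] [CompleteSpace K]
    (B : H →L[ℂ] K) (hB : IsClosed (LinearMap.range (B : H →ₗ[ℂ] K) : Set K))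
    (A₁ : H →L[ℂ] H) (hA₁ : A₁.IsPositive)
    (A₂ : K →L[ℂ] K) (hA₂ : A₂.IsPositive)
    (hc₁ : (PAS A₁ (LinearMap.ker (B : H →ₗ[ℂ] K))).Nonempty)
    (hc₂ : (PAS A₂ (LinearMap.range (B : H →ₗ[ℂ] K))).Nonempty)
    -- `Bd` is the Moore–Penrose inverse of `B`, characterized by the four Penrose equations.
    (Bd : K →L[ℂ] H) (hd1 : B ∘L Bd ∘L B = B) (hd2 : Bd ∘L B ∘L Bd = Bd)
    (hd3 : IsSelfAdjoint (B ∘L Bd)) (hd4 : IsSelfAdjoint (Bd ∘L B)) :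
    {C : K →L[ℂ] H |
        B ∘L C ∘L B = B ∧ C ∘L B ∘L C = C ∧
        A₁ ∘L (C ∘L B) = adjoint (C ∘L B) ∘L A₁ ∧
        A₂ ∘L (B ∘L C) = adjoint (B ∘L C) ∘L A₂} =
      {C : K →L[ℂ] H | ∃ Q ∈ PAS A₁ (LinearMap.ker (B : H →ₗ[ℂ] K)), ∃ P ∈ PAS A₂ (LinearMap.range (B : H →ₗ[ℂ] K)),
        C = (1 - Q) ∘L Bd ∘L P} :=
  stmt_7_general B A₁ A₂ Bd hd1
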